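/- Let $h : \overline{B^+} \to \mathbb{R}$ be a function on the closed upper half-ball $\overline{B^+} = \{x \in \mathbb{R}^n : |x| \leq r, x_n \geq 0\}$, continuous on $\overline{B^+}$, twice differentiable with $\Delta h \leq 0$ and $h > 0$ on the open upper half-ball, and with $h = 0$ on the flat boundary portion $\{|x| < r, x_n = 0\}$. Then the outward normal derivative $-\partial h/\partial x_n$ at the origin is strictly negative, i.e., $\partial h / \partial x_n (0) > 0$. -/

import Mathlib

/-!
The ball of radius `ρ = r / 2` about `ρ eₙ` lies in the half-ball and touches the flat boundary
at the origin. On the annulus `ρ / 2 ≤ ‖x - ρ eₙ‖ ≤ ρ` the barrier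
`v x = exp (-α ‖x - ρ eₙ‖²) - exp (-α ρ²)` is strictly subharmonic once `α ρ²` exceeds twice the
dimension; it vanishes on the outer sphere, and a small multiple `ε v` lies below `h` on the inner
sphere, where `h` has a positive minimum. The strictly superharmonic function `h - ε v` takes its
minimum over the annulus on its boundary, hence `ε v ≤ h` on the annulus. Both vanish at the
origin, so along the normal `∂ₙ h (0) ≥ ε ∂ₙ v (0) = 2 ε α ρ exp (-α ρ²) > 0`.
-/

open Set Filter Topology Metric InnerProductSpace Laplacian Module Real

theorem IsLocalMinOn.hasDerivWithinAt_Ici_nonneg {φ : ℝ → ℝ} {a D : ℝ}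
    (hmin : IsLocalMinOn φ (Ici a) a) (hφ : HasDerivWithinAt φ D (Ici a) a) : 0 ≤ D := by
  have h1 : (1 : ℝ) ∈ posTangentConeAt (Ici a) a :=
    mem_posTangentConeAt_of_segment_subset (by simp [segment_eq_Icc, Icc_subset_Ici_self])
  simpa using hmin.hasFDerivWithinAt_nonneg hφ.hasFDerivWithinAt h1

theorem IsLocalMin.secondDeriv_nonneg {g g' : ℝ → ℝ} {a c : ℝ} (hmin : IsLocalMin g a)
    (hg : ∀ᶠ t in 𝓝 a, HasDerivAt g (g' t) t) (hg' : HasDerivAt g' c a) : 0 ≤ c := by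
  by_contra! hc
  have hg'a : g' a = 0 := hmin.hasDerivAt_eq_zero hg.self_of_nhds
  have hneg : ∀ᶠ t in 𝓝[>] a, g' t < 0 := by
    filter_upwards [(hasDerivAt_iff_tendsto_slope.mp hg').mono_left
      (nhdsGT_le_nhdsNE a) |>.eventually (gt_mem_nhds hc), self_mem_nhdsWithin]
      with t hslope (hat : a < t)
    rwa [slope_def_field, hg'a, sub_zero, div_neg_iff, or_iff_right (by intro h; linarith [h.2]),
      and_iff_left (by linarith)] at hslope
  obtain ⟨u, hau, hu⟩ := mem_nhdsGT_iff_exists_Ioo_subset.mp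
    (hneg.and (nhdsWithin_le_nhds (hg.and hmin)))
  obtain ⟨b, hab, hbu⟩ := exists_between (mem_Ioi.mp hau)
  have hsub : Ioc a b ⊆ Ioo a u := fun t ht => ⟨ht.1, ht.2.trans_lt hbu⟩
  have hcont : ContinuousOn g (Icc a b) := by
    intro t ht
    rcases ht.1.eq_or_lt with rfl | hat
    · exact hg.self_of_nhds.continuousAt.continuousWithinAt
    · exact (hu (hsub ⟨hat, ht.2⟩)).2.1.continuousAt.continuousWithinAt
  obtain ⟨ξ, hξ, hslope⟩ := exists_hasDerivAt_eq_slope g g' hab hcont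
    fun t ht => (hu (hsub (Ioo_subset_Ioc_self ht))).2.1
  have hξneg : g' ξ < 0 := (hu (hsub (Ioo_subset_Ioc_self hξ))).1
  have hgb : g a ≤ g b := (hu ⟨hab, hbu⟩).2.2
  rw [hslope] at hξneg
  exact absurd hξneg (not_lt.mpr (div_nonneg (by linarith) (by linarith)))

theorem dist_eq_or_dist_eq_of_mem_annulus_frontier {X : Type*} [PseudoMetricSpace X] {c x : X}
    {r R : ℝ} (hx : x ∈ (closedBall c R \ ball c r) \ (ball c R \ closedBall c r)) :
    dist x c = R ∨ dist x c = r := by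
  simp only [Set.mem_sdiff, mem_closedBall, mem_ball, not_lt, not_and, not_le] at hx
  obtain ⟨⟨hR, hr⟩, hnot⟩ := hx
  rcases hR.lt_or_eq with hR' | hR'
  · exact Or.inr (le_antisymm (hnot hR') hr)
  · exact Or.inl hR'

section NormedSpace

variable {E : Type*} [NormedAddCommGroup E] [NormedSpace ℝ E] {f : E → ℝ} {x : E}

theorem hasDerivAt_add_smul (x u : E) (t : ℝ) : HasDerivAt (fun s : ℝ => x + s • u) u t := by
  simpa using ((hasDerivAt_id t).smul_const u).const_add x

theorem ContDiffAt.fderiv_fderiv_apply_eq_iteratedFDeriv (hf : ContDiffAt ℝ 2 f x) (u v : E) :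
    fderiv ℝ (fun y => fderiv ℝ f y u) x v = iteratedFDeriv ℝ 2 f x ![v, u] := by
  have hdf : DifferentiableAt ℝ (fderiv ℝ f) x :=
    (hf.fderiv_right (m := 1) (by norm_num)).differentiableAt one_ne_zero
  rw [fderiv_clm_apply hdf (differentiableAt_const u), iteratedFDeriv_two_apply]
  simp

theorem IsLocalMin.fderiv_fderiv_apply_self_nonneg (hmin : IsLocalMin f x)
    (hf : ContDiffAt ℝ 2 f x) (u : E) : 0 ≤ fderiv ℝ (fun y => fderiv ℝ f y u) x u := by
  have hx : x + (0 : ℝ) • u = x := by simp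
  have hline : Tendsto (fun t : ℝ => x + t • u) (𝓝 0) (𝓝 x) := by
    simpa using (hasDerivAt_add_smul x u 0).continuousAt.tendsto
  refine IsLocalMin.secondDeriv_nonneg (g := fun t => f (x + t • u))
    (g' := fun t => fderiv ℝ f (x + t • u) u) (a := 0) ?_ ?_ ?_
  · filter_upwards [hline.eventually hmin] with t ht
    rwa [hx]
  · filter_upwards [hline.eventually (hf.eventually (by simp))] with t ht
    exact (ht.differentiableAt (by norm_num)).hasFDerivAt.comp_hasDerivAt t
      (hasDerivAt_add_smul x u t)
  · have hdf : DifferentiableAt ℝ (fun y => fderiv ℝ f y u) x :=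
      ((hf.fderiv_right (m := 1) (by norm_num)).differentiableAt one_ne_zero).clm_apply
        (differentiableAt_const u)
    exact hdf.hasFDerivAt.comp_hasDerivAt_of_eq 0 (hasDerivAt_add_smul x u 0) hx.symm

end NormedSpace

section InnerProductSpace

variable {E : Type*} [NormedAddCommGroup E] [InnerProductSpace ℝ E]

theorem inner_nonneg_of_mem_closedBall_smul {u x : E} {ρ : ℝ} (hρ : 0 ≤ ρ) (hu : ‖u‖ = 1)
    (hx : x ∈ closedBall (ρ • u) ρ) : 0 ≤ ⟪x, u⟫_ℝ := by
  have h := norm_sub_sq_real x (ρ • u)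
  rw [inner_smul_right, norm_smul, hu, Real.norm_of_nonneg hρ, mul_one] at h
  have : ‖x - ρ • u‖ ^ 2 ≤ ρ ^ 2 :=
    pow_le_pow_left₀ (norm_nonneg _) (mem_closedBall_iff_norm.mp hx) 2
  have hinner : -‖x‖ ≤ ⟪x, u⟫_ℝ := by
    simpa [hu] using neg_le_of_abs_le (abs_real_inner_le_norm x u)
  by_contra! hneg
  nlinarith [mul_nonpos_of_nonneg_of_nonpos hρ hneg.le]

theorem inner_pos_of_mem_ball_smul {u x : E} {ρ : ℝ} (hρ : 0 ≤ ρ) (hu : ‖u‖ = 1)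
    (hx : x ∈ ball (ρ • u) ρ) : 0 < ⟪x, u⟫_ℝ := by
  have h := norm_sub_sq_real x (ρ • u)
  rw [inner_smul_right, norm_smul, hu, Real.norm_of_nonneg hρ, mul_one] at h
  have : ‖x - ρ • u‖ ^ 2 < ρ ^ 2 :=
    pow_lt_pow_left₀ (mem_ball_iff_norm.mp hx) (norm_nonneg _) two_ne_zero
  by_contra! hneg
  nlinarith [sq_nonneg ‖x‖, mul_nonpos_of_nonneg_of_nonpos hρ hneg]

theorem contDiff_exp_neg_mul_norm_sub_sq {n : WithTop ℕ∞} (α : ℝ) (c : E) :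
    ContDiff ℝ n fun y => exp (-α * ‖y - c‖ ^ 2) :=
  contDiff_exp.comp (contDiff_const.mul
    ((contDiff_norm_sq ℝ).comp (contDiff_id.sub contDiff_const)))

noncomputable def hopfBarrier (c : E) (α ρ : ℝ) (y : E) : ℝ :=
  exp (-α * ‖y - c‖ ^ 2) - exp (-α * ρ ^ 2)

theorem contDiff_hopfBarrier (c : E) (α ρ : ℝ) : ContDiff ℝ 2 (hopfBarrier c α ρ) :=
  (contDiff_exp_neg_mul_norm_sub_sq α c).sub contDiff_const

theorem hasFDerivAt_exp_neg_mul_norm_sub_sq (α : ℝ) (c y : E) :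
    HasFDerivAt (fun z => exp (-α * ‖z - c‖ ^ 2))
      ((-2 * α * exp (-α * ‖y - c‖ ^ 2)) • innerSL ℝ (y - c)) y := by
  refine ((((hasFDerivAt_id y).sub_const c).norm_sq).const_mul (-α)).exp.congr_fderiv ?_
  ext v
  simp only [id_eq, neg_mul, map_sub, ContinuousLinearMap.comp_id, neg_smul, smul_neg, neg_apply,
    smul_apply, sub_apply, coe_innerSL_apply, nsmul_eq_mul, Nat.cast_ofNat, smul_eq_mul, neg_inj]
  ring

theorem fderiv_fderiv_exp_neg_mul_norm_sub_sq_apply (α : ℝ) (c x u : E) :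
    fderiv ℝ (fun y => fderiv ℝ (fun z => exp (-α * ‖z - c‖ ^ 2)) y u) x u =
      exp (-α * ‖x - c‖ ^ 2) * (4 * α ^ 2 * ⟪x - c, u⟫_ℝ ^ 2 - 2 * α * ‖u‖ ^ 2) := by
  have hfun : (fun y => fderiv ℝ (fun z => exp (-α * ‖z - c‖ ^ 2)) y u) =
      fun y => -2 * α * exp (-α * ‖y - c‖ ^ 2) * ⟪y - c, u⟫_ℝ := by
    ext y
    rw [(hasFDerivAt_exp_neg_mul_norm_sub_sq α c y).fderiv]
    simp [inner_sub_left]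
  have hderiv : HasFDerivAt (fun y => -2 * α * exp (-α * ‖y - c‖ ^ 2) * ⟪y - c, u⟫_ℝ) _ x :=
    ((hasFDerivAt_exp_neg_mul_norm_sub_sq α c x).const_mul (-2 * α)).mul
      (((hasFDerivAt_id x).sub_const c).inner ℝ (hasFDerivAt_const u x))
  rw [hfun, hderiv.fderiv]
  simp only [neg_mul, id_eq, neg_smul, inner_sub_left, map_sub, smul_neg, neg_neg, add_apply,
    neg_apply, smul_apply, ContinuousLinearMap.comp_apply, ContinuousLinearMap.prod_apply,
    ContinuousLinearMap.id_apply, zero_apply, fderivInnerCLM_apply, inner_zero_right,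
    inner_self_eq_norm_sq_to_K, ringHom_apply, zero_add, smul_eq_mul, sub_apply, coe_innerSL_apply]
  ring

end InnerProductSpace

section Laplacian

variable {E : Type*} [NormedAddCommGroup E] [InnerProductSpace ℝ E] [FiniteDimensional ℝ E]

theorem ContDiffAt.laplacian_eq_sum_fderiv_fderiv {f : E → ℝ} {x : E} {ι : Type*} [Fintype ι]
    (b : OrthonormalBasis ι ℝ E) (hf : ContDiffAt ℝ 2 f x) :
    Δ f x = ∑ i, fderiv ℝ (fun y => fderiv ℝ f y (b i)) x (b i) := by
  simp [laplacian_eq_iteratedFDeriv_orthonormalBasis f b,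
    hf.fderiv_fderiv_apply_eq_iteratedFDeriv]

theorem IsLocalMin.laplacian_nonneg {f : E → ℝ} {x : E} (hmin : IsLocalMin f x)
    (hf : ContDiffAt ℝ 2 f x) : 0 ≤ Δ f x := by
  rw [hf.laplacian_eq_sum_fderiv_fderiv (stdOrthonormalBasis ℝ E)]
  exact Finset.sum_nonneg fun i _ => hmin.fderiv_fderiv_apply_self_nonneg hf _

theorem IsCompact.nonneg_of_laplacian_neg {K U : Set E} {w : E → ℝ} (hK : IsCompact K)
    (hU : IsOpen U) (hUK : U ⊆ K) (hw : ContinuousOn w K) (hC2 : ∀ x ∈ U, ContDiffAt ℝ 2 w x)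
    (hlap : ∀ x ∈ U, Δ w x < 0) (hbdry : ∀ x ∈ K \ U, 0 ≤ w x) {x : E} (hx : x ∈ K) :
    0 ≤ w x := by
  obtain ⟨x₀, hx₀K, hx₀min⟩ := hK.exists_isMinOn ⟨x, hx⟩ hw
  refine le_trans ?_ (hx₀min hx)
  by_contra! hneg
  have hx₀U : x₀ ∈ U := by_contra fun h => hneg.not_ge (hbdry x₀ ⟨hx₀K, h⟩)
  exact (hlap x₀ hx₀U).not_ge
    ((hx₀min.isLocalMin (mem_of_superset (hU.mem_nhds hx₀U) hUK)).laplacian_nonneg (hC2 x₀ hx₀U))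

theorem laplacian_exp_neg_mul_norm_sub_sq (α : ℝ) (c x : E) :
    Δ (fun y => exp (-α * ‖y - c‖ ^ 2)) x =
      exp (-α * ‖x - c‖ ^ 2) * (4 * α ^ 2 * ‖x - c‖ ^ 2 - 2 * α * finrank ℝ E) := by
  set b := stdOrthonormalBasis ℝ E
  have hparseval : ∑ i, ⟪x - c, b i⟫_ℝ ^ 2 = ‖x - c‖ ^ 2 := by
    simpa [← sq, real_inner_comm, real_inner_self_eq_norm_sq] using
      b.sum_inner_mul_inner (x - c) (x - c)
  simp only [(contDiff_exp_neg_mul_norm_sub_sq α c).contDiffAt.laplacian_eq_sum_fderiv_fderiv b,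
    fderiv_fderiv_exp_neg_mul_norm_sub_sq_apply, b.orthonormal.1, ← Finset.mul_sum,
    Finset.sum_sub_distrib, hparseval]
  simp

theorem laplacian_hopfBarrier_pos {c y : E} {α ρ : ℝ} (hρ : 0 ≤ ρ)
    (hα : 2 * finrank ℝ E < α * ρ ^ 2) (hy : ρ / 2 < ‖y - c‖) :
    0 < Δ (hopfBarrier c α ρ) y := by
  have hα₀ : 0 < α :=
    pos_of_mul_pos_left ((by positivity : (0 : ℝ) ≤ 2 * finrank ℝ E).trans_lt hα) (sq_nonneg ρ)
  have hsplit : hopfBarrier c α ρ =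
      (fun y => exp (-α * ‖y - c‖ ^ 2)) - fun _ => exp (-α * ρ ^ 2) := rfl
  rw [hsplit, ContDiffAt.laplacian_sub (contDiff_exp_neg_mul_norm_sub_sq α c).contDiffAt
    contDiffAt_const, laplacian_exp_neg_mul_norm_sub_sq, laplacian_const]
  have hy' : (ρ / 2) ^ 2 < ‖y - c‖ ^ 2 := pow_lt_pow_left₀ hy (by positivity) two_ne_zero
  have : 2 * α * finrank ℝ E < 4 * α ^ 2 * ‖y - c‖ ^ 2 := by nlinarith
  rw [Pi.zero_apply, sub_zero]
  exact mul_pos (exp_pos _) (by linarith)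

theorem exists_pos_smul_hopfBarrier_le {f : E → ℝ} {c : E} {α ρ : ℝ} (hρ : 0 < ρ)
    (hα : 2 * finrank ℝ E < α * ρ ^ 2) (hcont : ContinuousOn f (closedBall c ρ))
    (hC2 : ContDiffOn ℝ 2 f (ball c ρ)) (hpos : ∀ x ∈ ball c ρ, 0 < f x)
    (hsuper : ∀ x ∈ ball c ρ, Δ f x ≤ 0) :
    ∃ ε > 0, ∀ y ∈ closedBall c ρ \ ball c (ρ / 2), ε * hopfBarrier c α ρ y ≤ f y := by
  have hα₀ : 0 < α :=
    pos_of_mul_pos_left ((by positivity : (0 : ℝ) ≤ 2 * finrank ℝ E).trans_lt hα) (sq_nonneg ρ)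
  have hsphere : sphere c (ρ / 2) ⊆ ball c ρ := sphere_subset_ball (by linarith)
  obtain ⟨m, hm, hmf⟩ := (isCompact_sphere c (ρ / 2)).exists_forall_le'
    (hcont.mono (hsphere.trans ball_subset_closedBall)) fun y hy => hpos y (hsphere hy)
  set β := exp (-α * (ρ / 2) ^ 2) - exp (-α * ρ ^ 2)
  have hβ : 0 < β := sub_pos.mpr (exp_lt_exp.mpr (by nlinarith))
  refine ⟨m / β, div_pos hm hβ, fun y hy => ?_⟩
  have hBC2 := contDiff_hopfBarrier c α ρ
  have hεBC2 : ∀ x, ContDiffAt ℝ 2 ((m / β) • hopfBarrier c α ρ) x :=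
    fun x => hBC2.contDiffAt.const_smul (m / β)
  have hw := IsCompact.nonneg_of_laplacian_neg (w := f - (m / β) • hopfBarrier c α ρ)
    ((isCompact_closedBall c ρ).diff isOpen_ball) (isOpen_ball.sdiff isClosed_closedBall)
    (sdiff_subset_sdiff ball_subset_closedBall ball_subset_closedBall)
    ((hcont.mono sdiff_subset).sub (hBC2.continuous.continuousOn.const_smul _))
    (fun x hx => (hC2.contDiffAt (isOpen_ball.mem_nhds hx.1)).sub (hεBC2 x)) ?_ ?_ hy
  · simpa [sub_nonneg] using hw
  · rintro x ⟨hxρ, hxρ2⟩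
    rw [ContDiffAt.laplacian_sub (hC2.contDiffAt (isOpen_ball.mem_nhds hxρ)) (hεBC2 x),
      laplacian_smul _ hBC2.contDiffAt, smul_eq_mul]
    have := laplacian_hopfBarrier_pos hρ.le hα (y := x) (c := c)
      (by rwa [mem_closedBall_iff_norm, not_le] at hxρ2)
    nlinarith [hsuper x hxρ, div_pos hm hβ]
  · intro x hx
    simp only [Pi.sub_apply, Pi.smul_apply, smul_eq_mul, sub_nonneg]
    rcases dist_eq_or_dist_eq_of_mem_annulus_frontier hx with hρx | hρx
    · have hxρ : x ∈ closure (ball c ρ) := by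
        rw [closure_ball c hρ.ne', mem_closedBall, hρx]
      simp only [hopfBarrier, ← dist_eq_norm, hρx, sub_self, mul_zero]
      exact le_on_closure (fun y hy => (hpos y hy).le) continuousOn_const
        (closure_ball c hρ.ne' ▸ hcont) hxρ
    · simp only [hopfBarrier, ← dist_eq_norm, hρx]
      rw [div_mul_cancel₀ m hβ.ne']
      exact hmf x (mem_sphere.mpr hρx)

theorem hopf_lemma_ball {f : E → ℝ} {x₀ u : E} {ρ d : ℝ} (hρ : 0 < ρ) (hu : ‖u‖ = 1)
    (hcont : ContinuousOn f (closedBall (x₀ + ρ • u) ρ))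
    (hC2 : ContDiffOn ℝ 2 f (ball (x₀ + ρ • u) ρ)) (hpos : ∀ x ∈ ball (x₀ + ρ • u) ρ, 0 < f x)
    (hsuper : ∀ x ∈ ball (x₀ + ρ • u) ρ, Δ f x ≤ 0) (hf₀ : f x₀ = 0)
    (hd : HasDerivWithinAt (fun t : ℝ => f (x₀ + t • u)) d (Ici 0) 0) : 0 < d := by
  set α := (2 * finrank ℝ E + 1) / ρ ^ 2
  have hα : 2 * finrank ℝ E < α * ρ ^ 2 := by
    rw [div_mul_cancel₀ _ (by positivity)]; linarith
  obtain ⟨ε, hε, hεf⟩ := exists_pos_smul_hopfBarrier_le hρ hα hcont hC2 hpos hsuper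
  have hdist : ∀ t : ℝ, ‖x₀ + t • u - (x₀ + ρ • u)‖ = |t - ρ| := by
    intro t
    rw [add_sub_add_left_eq_sub, ← sub_smul, norm_smul, hu, mul_one, Real.norm_eq_abs]
  set g := fun t : ℝ => ε * (exp (-α * (t - ρ) ^ 2) - exp (-α * ρ ^ 2))
  have hg : HasDerivAt g (ε * (2 * α * ρ * exp (-α * ρ ^ 2))) 0 := by
    refine (((((hasDerivAt_id (0 : ℝ)).sub_const ρ).pow 2).const_mul (-α)).exp.sub_const
      (exp (-α * ρ ^ 2)) |>.const_mul ε).congr_deriv ?_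
    simp only [id, Pi.pow_apply, zero_sub, even_two.neg_pow]
    ring
  have hmin : IsLocalMinOn (fun t => f (x₀ + t • u) - g t) (Ici 0) 0 := by
    filter_upwards [Ico_mem_nhdsGE (half_pos hρ)] with t ht
    have hmem : x₀ + t • u ∈ closedBall (x₀ + ρ • u) ρ \ ball (x₀ + ρ • u) (ρ / 2) := by
      rw [Set.mem_sdiff, mem_closedBall_iff_norm, mem_ball_iff_norm, hdist, not_lt,
        abs_of_nonpos (by linarith [ht.2])]
      constructor <;> linarith [ht.1, ht.2]
    have := hεf _ hmem
    simp only [hopfBarrier, hdist, sq_abs] at this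
    simp only [g, zero_smul, add_zero, hf₀, zero_sub, even_two.neg_pow, sub_self, mul_zero]
    linarith
  have hD := hmin.hasDerivWithinAt_Ici_nonneg (hd.sub hg.hasDerivWithinAt)
  have : 0 < ε * (2 * α * ρ * exp (-α * ρ ^ 2)) := by positivity
  linarith

end Laplacian

/-- Hopf boundary point lemma on a half-ball: if `h` is continuous on the closed upper
half-ball, positive and superharmonic (`Δh ≤ 0`) on the open upper half-ball, twice
differentiable there, and vanishes on the flat boundary portion, then the inward normal
derivative of `h` at the origin (if it exists) is strictly positive. -/
theorem stmt_7 (n : ℕ) (r : ℝ) (hr : 0 < r)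
    (h : EuclideanSpace ℝ (Fin (n + 1)) → ℝ)
    (hcont : ContinuousOn h {x | ‖x‖ ≤ r ∧ 0 ≤ x (Fin.last n)})
    (hC2 : ContDiffOn ℝ 2 h {x | ‖x‖ < r ∧ 0 < x (Fin.last n)})
    (hpos : ∀ x, ‖x‖ < r → 0 < x (Fin.last n) → 0 < h x)
    (hsuper : ∀ x, ‖x‖ < r → 0 < x (Fin.last n) →
      (∑ i : Fin (n + 1),
          fderiv ℝ (fun y => fderiv ℝ h y (EuclideanSpace.single i 1)) x
            (EuclideanSpace.single i 1)) ≤ 0)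
    (hzero : ∀ x, ‖x‖ < r → x (Fin.last n) = 0 → h x = 0) :
    ∀ d : ℝ,
      HasDerivWithinAt (fun t : ℝ => h (t • EuclideanSpace.single (Fin.last n) 1))
        d (Set.Ici (0:ℝ)) 0 → 0 < d := by
  intro d hd
  set e : EuclideanSpace ℝ (Fin (n + 1)) := EuclideanSpace.single (Fin.last n) 1
  have he : ‖e‖ = 1 := by simp [e]
  have hcoord : ∀ x : EuclideanSpace ℝ (Fin (n + 1)), x (Fin.last n) = ⟪x, e⟫_ℝ := by
    simp [e, EuclideanSpace.inner_single_right]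
  have hnorm : ‖(r / 2) • e‖ + r / 2 = r := by
    rw [norm_smul, he, Real.norm_of_nonneg (by positivity)]; ring
  have hclosed : closedBall ((r / 2) • e) (r / 2) ⊆ {x | ‖x‖ ≤ r ∧ 0 ≤ x (Fin.last n)} :=
    fun x hx => ⟨hnorm ▸ norm_le_of_mem_closedBall hx,
      hcoord x ▸ inner_nonneg_of_mem_closedBall_smul (by positivity) he hx⟩
  have hopen : ball ((r / 2) • e) (r / 2) ⊆ {x | ‖x‖ < r ∧ 0 < x (Fin.last n)} :=
    fun x hx => ⟨hnorm ▸ norm_lt_of_mem_ball hx,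
      hcoord x ▸ inner_pos_of_mem_ball_smul (by positivity) he hx⟩
  have hhalf : IsOpen {x : EuclideanSpace ℝ (Fin (n + 1)) | ‖x‖ < r ∧ 0 < x (Fin.last n)} :=
    (isOpen_lt continuous_norm continuous_const).inter
      (isOpen_lt continuous_const (EuclideanSpace.proj (Fin.last n)).continuous)
  have hball := hopf_lemma_ball (f := h) (x₀ := 0) (u := e) (d := d) (half_pos hr) he
  simp only [zero_add] at hball
  refine hball (hcont.mono hclosed) (hC2.mono hopen)
    (fun x hx => hpos x (hopen hx).1 (hopen hx).2) (fun x hx => ?_)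
    (hzero 0 (by simpa using hr) (by simp)) hd
  rw [(hC2.contDiffAt (hhalf.mem_nhds (hopen hx))).laplacian_eq_sum_fderiv_fderiv
    (EuclideanSpace.basisFun (Fin (n + 1)) ℝ)]
  simpa [EuclideanSpace.basisFun_apply] using hsuper x (hopen hx).1 (hopen hx).2
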